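/- Every closed subset of 2^ω of positive measure (with respect to the standard coin-flipping product measure) contains the body of a Silver tree. -/

import Mathlib

open Set MeasureTheory ENNReal

/-- `T` is a tree on `2`: a set of finite binary sequences closed under initial segments. -/
def IsTree2 (T : Set (List Bool)) : Prop := ∀ σ ∈ T, ∀ n : ℕ, σ.take n ∈ T

/-- The body of a tree: all infinite binary sequences all of whose initial segments lie in `T`. -/
def body2 (T : Set (List Bool)) : Set (ℕ → Bool) :=
  {x | ∀ n : ℕ, List.ofFn (fun i : Fin n => x i) ∈ T}

/-- `σ` is a splitting node of `T`: both immediate successors of `σ` lie in `T`. -/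
def Splits2 (T : Set (List Bool)) (σ : List Bool) : Prop :=
  σ ++ [false] ∈ T ∧ σ ++ [true] ∈ T

/-- `T` is a perfect tree on `2`: a nonempty tree in which every node has a splitting
extension in `T`. -/
def IsPerfectTree2 (T : Set (List Bool)) : Prop :=
  T.Nonempty ∧ IsTree2 T ∧ ∀ σ ∈ T, ∃ τ ∈ T, σ <+: τ ∧ Splits2 T τ

/-- `T` is a Silver tree: a perfect tree such that nodes of equal length have the same
immediate successor extensions. -/
def IsSilverTree2 (T : Set (List Bool)) : Prop :=
  IsPerfectTree2 T ∧
    ∀ σ ∈ T, ∀ τ ∈ T, σ.length = τ.length → ∀ a : Bool, (σ ++ [a] ∈ T ↔ τ ++ [a] ∈ T)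

/-- The basic clopen set of all elements of Cantor space extending `σ`. -/
def cylB (σ : List Bool) : Set (ℕ → Bool) :=
  {x | ∀ i : Fin σ.length, x i = σ.get i}

namespace SilverAux

lemma mem_cylB {σ : List Bool} {x : ℕ → Bool} :
    x ∈ cylB σ ↔ ∀ i, (h : i < σ.length) → x i = σ[i] := by
  constructor
  · intro hx i h; exact hx ⟨i, h⟩
  · intro hx ⟨i, h⟩; exact hx i h

def app (σ : List Bool) (y : ℕ → Bool) : ℕ → Bool :=
  fun i => if h : i < σ.length then σ[i] else y (i - σ.length)

def shf (n : ℕ) (x : ℕ → Bool) : ℕ → Bool := fun i => x (n + i)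

lemma app_lt (σ : List Bool) (y : ℕ → Bool) {i : ℕ} (h : i < σ.length) :
    app σ y i = σ[i] := dif_pos h

lemma app_ge (σ : List Bool) (y : ℕ → Bool) {i : ℕ} (h : σ.length ≤ i) :
    app σ y i = y (i - σ.length) := dif_neg (by omega)

lemma app_mem_cylB (σ : List Bool) (y : ℕ → Bool) : app σ y ∈ cylB σ :=
  mem_cylB.2 fun i h => app_lt σ y h

lemma app_shf {σ : List Bool} {x : ℕ → Bool} (hx : x ∈ cylB σ) :
    app σ (shf σ.length x) = x := by
  funext i
  by_cases h : i < σ.length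
  · rw [app_lt σ _ h]; exact (mem_cylB.1 hx i h).symm
  · rw [app_ge σ _ (by omega)]; simp only [shf]; congr 1; omega

lemma app_app (σ τ : List Bool) (y : ℕ → Bool) :
    app σ (app τ y) = app (σ ++ τ) y := by
  funext i
  by_cases h1 : i < σ.length
  · rw [app_lt σ _ h1, app_lt _ _ (by simp; omega)]
    simp [List.getElem_append, h1]
  · rw [app_ge σ _ (by omega)]
    by_cases h2 : i < σ.length + τ.length
    · rw [app_lt τ _ (by omega), app_lt _ _ (by simp; omega)]
      rw [List.getElem_append_right (by omega)]
    · rw [app_ge τ _ (by omega), app_ge _ _ (by simp; omega)]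
      simp; congr 1; omega

lemma cylB_nil : cylB ([] : List Bool) = univ := by
  ext x; simp [mem_cylB]

lemma cylB_append (σ τ : List Bool) :
    cylB (σ ++ τ) = cylB σ ∩ shf σ.length ⁻¹' cylB τ := by
  ext x
  simp only [mem_inter_iff, mem_preimage, mem_cylB]
  constructor
  · intro h
    refine ⟨fun i hi => ?_, fun i hi => ?_⟩
    · rw [h i (by simp; omega)]; simp [List.getElem_append, hi]
    · rw [show shf σ.length x i = x (σ.length + i) from rfl,
        h (σ.length + i) (by simp; omega)]
      rw [List.getElem_append_right (by omega)]
      congr 1; omega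
  · rintro ⟨h1, h2⟩ i hi
    by_cases hl : i < σ.length
    · rw [List.getElem_append_left hl]; exact h1 i hl
    · rw [List.getElem_append_right (by omega)]
      have := h2 (i - σ.length) (by simp at hi ⊢; omega)
      rw [show shf σ.length x (i - σ.length) = x i from by simp only [shf]; congr 1; omega] at this
      exact this

lemma cylB_subset_of_prefix {σ τ : List Bool} (h : σ <+: τ) : cylB τ ⊆ cylB σ := by
  obtain ⟨t, rfl⟩ := h
  rw [cylB_append]; exact inter_subset_left

lemma measurableSet_cylB (σ : List Bool) : MeasurableSet (cylB σ) := by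
  have : cylB σ = ⋂ i : Fin σ.length, (fun x : ℕ → Bool => x i) ⁻¹' {σ.get i} := by
    ext x; simp [cylB, mem_iInter]
  rw [this]
  exact MeasurableSet.iInter fun i =>
    (measurable_pi_apply (i : ℕ)) (measurableSet_singleton _)

lemma isOpen_cylB (σ : List Bool) : IsOpen (cylB σ) := by
  have : cylB σ = ⋂ i : Fin σ.length, (fun x : ℕ → Bool => x i) ⁻¹' {σ.get i} := by
    ext x; simp [cylB, mem_iInter]
  rw [this]
  exact isOpen_iInter_of_finite fun i => (continuous_apply (i : ℕ)).isOpen_preimage _ trivial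

lemma measurable_app (σ : List Bool) : Measurable (app σ) := by
  rw [measurable_pi_iff]
  intro i
  by_cases h : i < σ.length
  · simp only [app, dif_pos h]; exact measurable_const
  · simp only [app, dif_neg h]; exact measurable_pi_apply _

lemma measurable_shf (n : ℕ) : Measurable (shf n) := by
  rw [measurable_pi_iff]; intro i; exact measurable_pi_apply _

/-- Membership basis lemma -/
lemma exists_cylB_subset {U : Set (ℕ → Bool)} (hU : IsOpen U) {x : ℕ → Bool} (hx : x ∈ U) :
    ∃ n : ℕ, cylB (List.ofFn fun i : Fin n => x i) ⊆ U := by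
  obtain ⟨I, u, hIu, hsub⟩ := isOpen_pi_iff.1 hU x hx
  refine ⟨(I.sup id) + 1, fun y hy => hsub ?_⟩
  intro i hi
  have hilt : i < (I.sup id) + 1 := Nat.lt_succ_of_le (Finset.le_sup (f := id) hi)
  have := mem_cylB.1 hy i (by simpa using hilt)
  rw [List.getElem_ofFn] at this
  rw [this]
  exact (hIu i hi).2

lemma self_mem_cylB_ofFn (x : ℕ → Bool) (n : ℕ) :
    x ∈ cylB (List.ofFn fun i : Fin n => x i) := by
  refine mem_cylB.2 fun i h => ?_
  rw [List.getElem_ofFn]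

end SilverAux

namespace SilverAux

def cylSets : Set (Set (ℕ → Bool)) := {s | ∃ σ : List Bool, s = cylB σ}

lemma isPiSystem_cylSets : IsPiSystem cylSets := by
  rintro s ⟨σ, rfl⟩ t ⟨τ, rfl⟩ hne
  obtain ⟨x, hxσ, hxτ⟩ := hne
  rcases le_total σ.length τ.length with h | h
  · refine ⟨τ, ?_⟩
    have hpre : σ <+: τ := by
      refine List.prefix_iff_eq_take.2 (List.ext_getElem (by simp [h]) ?_)
      intro i h1 h2
      rw [List.getElem_take]
      rw [← mem_cylB.1 hxσ i (by omega), ← mem_cylB.1 hxτ i (by omega)]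
    rw [inter_eq_right.2 (cylB_subset_of_prefix hpre)]
  · refine ⟨σ, ?_⟩
    have hpre : τ <+: σ := by
      refine List.prefix_iff_eq_take.2 (List.ext_getElem (by simp [h]) ?_)
      intro i h1 h2
      rw [List.getElem_take]
      rw [← mem_cylB.1 hxσ i (by omega), ← mem_cylB.1 hxτ i (by omega)]
    rw [inter_eq_left.2 (cylB_subset_of_prefix hpre)]

lemma eval_preimage_singleton (i : ℕ) (b : Bool) :
    {x : ℕ → Bool | x i = b} =
      ⋃ (σ : List Bool) (_ : σ.length = i + 1 ∧ σ.getD i false = b), cylB σ := by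
  ext x
  simp only [mem_setOf_eq, mem_iUnion]
  constructor
  · intro hx
    refine ⟨List.ofFn fun j : Fin (i + 1) => x j, ⟨by simp, ?_⟩, ?_⟩
    · rw [List.getD_eq_getElem _ _ (by simp), List.getElem_ofFn]; exact hx
    · exact self_mem_cylB_ofFn x (i + 1)
  · rintro ⟨σ, ⟨hlen, hget⟩, hx⟩
    rw [← hget, List.getD_eq_getElem _ _ (by omega)]
    exact mem_cylB.1 hx i (by omega)

lemma generateFrom_cylSets :
    (inferInstance : MeasurableSpace (ℕ → Bool)) = MeasurableSpace.generateFrom cylSets := by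
  refine le_antisymm ?_ (MeasurableSpace.generateFrom_le ?_)
  · rw [MeasurableSpace.pi_eq_generateFrom_projections]
    refine MeasurableSpace.generateFrom_le ?_
    rintro s ⟨i, t, _, rfl⟩
    have : (fun x : ℕ → Bool => x i) ⁻¹' t = ⋃ b ∈ t, {x : ℕ → Bool | x i = b} := by
      ext x; simp
    rw [this]
    refine MeasurableSet.biUnion t.to_countable fun b _ => ?_
    rw [eval_preimage_singleton]
    refine MeasurableSet.biUnion (Set.to_countable _) fun σ _ => ?_
    exact MeasurableSpace.measurableSet_generateFrom ⟨σ, rfl⟩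
  · rintro s ⟨σ, rfl⟩; exact measurableSet_cylB σ

variable {μ : Measure (ℕ → Bool)} [IsProbabilityMeasure μ]
  (hμ : ∀ σ : List Bool, μ (cylB σ) = (1 / 2 : ℝ≥0∞) ^ σ.length)

lemma half_pow_ne_top (n : ℕ) : ((1 / 2 : ℝ≥0∞)) ^ n ≠ ⊤ := by
  simp [ENNReal.pow_ne_top]

lemma two_pow_mul_half_pow (n : ℕ) : (2 : ℝ≥0∞) ^ n * (1 / 2) ^ n = 1 := by
  rw [← mul_pow, show (2 : ℝ≥0∞) * (1 / 2) = 1 by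
    rw [one_div, ENNReal.mul_inv_cancel (by norm_num) (by norm_num)], one_pow]

include hμ in
/-- Key identity: the conditional measure above `σ` pulled back by `app σ` is `μ` itself. -/
lemma measure_app_preimage {B : Set (ℕ → Bool)} (hB : MeasurableSet B) (σ : List Bool) :
    μ (app σ ⁻¹' B) = 2 ^ σ.length * μ (B ∩ cylB σ) := by
  set n := σ.length
  set θ : Measure (ℕ → Bool) :=
    (2 : ℝ≥0∞) ^ n • Measure.map (shf n) (μ.restrict (cylB σ)) with hθ
  have hθap : ∀ {C : Set (ℕ → Bool)}, MeasurableSet C →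
      θ C = 2 ^ n * μ (shf n ⁻¹' C ∩ cylB σ) := by
    intro C hC
    rw [hθ]
    simp only [Measure.smul_apply, smul_eq_mul]
    rw [Measure.map_apply (measurable_shf n) hC,
      Measure.restrict_apply (hC.preimage (measurable_shf n))]
  have hθμ : θ = μ := by
    have huniv : θ univ = μ univ := by
      rw [hθap MeasurableSet.univ]
      simp only [preimage_univ, univ_inter]
      rw [hμ σ, measure_univ, two_pow_mul_half_pow]
    haveI : IsProbabilityMeasure θ := ⟨by rw [huniv, measure_univ]⟩
    refine (ext_of_generate_finite cylSets generateFrom_cylSets isPiSystem_cylSets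
      (fun s hs => ?_) huniv)
    obtain ⟨τ, rfl⟩ := hs
    rw [hθap (measurableSet_cylB τ)]
    have : shf n ⁻¹' cylB τ ∩ cylB σ = cylB (σ ++ τ) := by
      rw [cylB_append, inter_comm]
    rw [this, hμ, hμ, List.length_append]
    rw [pow_add, ← mul_assoc, two_pow_mul_half_pow, one_mul]
  have hkey : shf n ⁻¹' (app σ ⁻¹' B) ∩ cylB σ = B ∩ cylB σ := by
    ext x
    simp only [mem_inter_iff, mem_preimage]
    constructor
    · rintro ⟨h1, h2⟩
      rw [app_shf h2] at h1; exact ⟨h1, h2⟩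
    · rintro ⟨h1, h2⟩
      rw [show shf n x = shf σ.length x from rfl, app_shf h2]; exact ⟨h1, h2⟩
  calc μ (app σ ⁻¹' B) = θ (app σ ⁻¹' B) := by rw [hθμ]
    _ = 2 ^ n * μ (shf n ⁻¹' (app σ ⁻¹' B) ∩ cylB σ) := hθap (hB.preimage (measurable_app σ))
    _ = 2 ^ n * μ (B ∩ cylB σ) := by rw [hkey]

end SilverAux

namespace SilverAux

variable {μ : Measure (ℕ → Bool)} [IsProbabilityMeasure μ]

lemma take_ofFn (x : ℕ → Bool) {m n : ℕ} (h : m ≤ n) :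
    (List.ofFn fun i : Fin n => x i).take m = List.ofFn fun i : Fin m => x i := by
  refine List.ext_getElem (by simp [h]) ?_
  intro i h1 h2
  rw [List.getElem_take, List.getElem_ofFn, List.getElem_ofFn]

variable (hμ : ∀ σ : List Bool, μ (cylB σ) = (1 / 2 : ℝ≥0∞) ^ σ.length)

omit hμ in
lemma density {G : Set (ℕ → Bool)} (hG : MeasurableSet G) (hpos : 0 < μ G) :
    ∃ u : List Bool, 8 * μ (Gᶜ ∩ cylB u) ≤ μ (cylB u) := by
  by_contra hcon
  push_neg at hcon
  -- per-cylinder bound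
  have pbound : ∀ u : List Bool, 8 * μ (G ∩ cylB u) ≤ 7 * μ (cylB u) := by
    intro u
    have hadd : μ (cylB u ∩ G) + μ (cylB u \ G) = μ (cylB u) := measure_inter_add_diff _ hG
    have hbad : μ (cylB u) ≤ 8 * μ (cylB u \ G) := by
      rw [diff_eq, inter_comm]
      exact (hcon u).le
    have h1 : 8 * μ (G ∩ cylB u) + μ (cylB u) ≤ 7 * μ (cylB u) + μ (cylB u) := by
      calc 8 * μ (G ∩ cylB u) + μ (cylB u)
          ≤ 8 * μ (G ∩ cylB u) + 8 * μ (cylB u \ G) := add_le_add_right hbad _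
        _ = 8 * (μ (cylB u ∩ G) + μ (cylB u \ G)) := by rw [inter_comm]; ring
        _ = 8 * μ (cylB u) := by rw [hadd]
        _ = 7 * μ (cylB u) + μ (cylB u) := by ring
    exact (WithTop.add_le_add_iff_right (measure_ne_top μ _)).1 h1
  have hGne : μ G ≠ ⊤ := measure_ne_top μ G
  -- outer regular open cover
  have hlt : μ G < μ G + μ G / 7 := by
    refine ENNReal.lt_add_right hGne (ENNReal.div_pos hpos.ne' (by norm_num)).ne'
  obtain ⟨U, hGU, hUopen, hUlt⟩ := Set.exists_isOpen_lt_of_lt G _ hlt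
  -- minimal cylinders inside U
  set W : Set (List Bool) :=
    {u | cylB u ⊆ U ∧ ∀ m < u.length, ¬ cylB (u.take m) ⊆ U} with hW
  have hcover : G ⊆ ⋃ u ∈ W, cylB u := by
    intro x hx
    have hxU : x ∈ U := hGU hx
    have hex : ∃ n, cylB (List.ofFn fun i : Fin n => x i) ⊆ U :=
      exists_cylB_subset hUopen hxU
    classical
    let n₀ := Nat.find hex
    refine mem_biUnion (?_ : (List.ofFn fun i : Fin n₀ => x i) ∈ W) (self_mem_cylB_ofFn x n₀)
    refine ⟨Nat.find_spec hex, fun m hm => ?_⟩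
    simp only [List.length_ofFn] at hm
    rw [take_ofFn x hm.le]
    exact Nat.find_min hex hm
  have hdisj : W.PairwiseDisjoint cylB := by
    intro u hu v hv huv
    rw [Function.onFun, Set.disjoint_left]
    intro x hxu hxv
    rcases le_total u.length v.length with h | h
    · have hpre : u <+: v := by
        refine List.prefix_iff_eq_take.2 (List.ext_getElem (by simp [h]) ?_)
        intro i h1 h2
        rw [List.getElem_take, ← mem_cylB.1 hxu i (by omega), ← mem_cylB.1 hxv i (by omega)]
      have hlen : u.length < v.length := by
        rcases lt_or_eq_of_le h with h' | h'
        · exact h'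
        · exact absurd (List.prefix_iff_eq_take.1 hpre ▸ by rw [h', List.take_length]) huv
      exact hv.2 u.length hlen (by rw [← List.prefix_iff_eq_take.1 hpre]; exact hu.1)
    · have hpre : v <+: u := by
        refine List.prefix_iff_eq_take.2 (List.ext_getElem (by simp [h]) ?_)
        intro i h1 h2
        rw [List.getElem_take, ← mem_cylB.1 hxv i (by omega), ← mem_cylB.1 hxu i (by omega)]
      have hlen : v.length < u.length := by
        rcases lt_or_eq_of_le h with h' | h'
        · exact h'
        · exact absurd (List.prefix_iff_eq_take.1 hpre ▸ by rw [h', List.take_length]) huv.symm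
      exact hu.2 v.length hlen (by rw [← List.prefix_iff_eq_take.1 hpre]; exact hv.1)
  have hWcount : W.Countable := Set.to_countable W
  have hchain : 8 * μ G ≤ 7 * μ U := by
    calc 8 * μ G ≤ 8 * μ (⋃ u ∈ W, G ∩ cylB u) := by
          refine mul_le_mul_right (measure_mono fun x hx => ?_) _
          obtain ⟨u, hu, hxu⟩ := mem_iUnion₂.1 (hcover hx)
          exact mem_biUnion hu ⟨hx, hxu⟩
      _ ≤ 8 * ∑' u : W, μ (G ∩ cylB u) :=
          mul_le_mul_right (measure_biUnion_le μ hWcount _) _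
      _ = ∑' u : W, 8 * μ (G ∩ cylB u) := ENNReal.tsum_mul_left.symm
      _ ≤ ∑' u : W, 7 * μ (cylB u) := ENNReal.tsum_le_tsum fun u => pbound u
      _ = 7 * ∑' u : W, μ (cylB u) := ENNReal.tsum_mul_left
      _ = 7 * μ (⋃ u ∈ W, cylB u) := by
          rw [measure_biUnion hWcount hdisj fun u _ => measurableSet_cylB u]
      _ ≤ 7 * μ U := by
          refine mul_le_mul_right (measure_mono ?_) _
          exact iUnion₂_subset fun u hu => hu.1
  have hfinal : 8 * μ G < 8 * μ G := by
    calc 8 * μ G ≤ 7 * μ U := hchain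
      _ < 7 * (μ G + μ G / 7) := by
          rw [ENNReal.mul_lt_mul_iff_right (by norm_num) (by norm_num)]
          exact hUlt
      _ = 7 * μ G + 7 * (μ G / 7) := by rw [mul_add]
      _ = 7 * μ G + μ G := by rw [ENNReal.mul_div_cancel' (by norm_num) (by norm_num)]
      _ = 8 * μ G := by ring
  exact lt_irrefl _ hfinal

end SilverAux

namespace SilverAux

/-! ### The Silver tree generated by a sequence of words -/

def glue (w : ℕ → List Bool) (z : ℕ → Bool) : ℕ → List Bool
  | 0 => w 0
  | k+1 => glue w z k ++ (w (k+1) ++ [z k])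

def Lv (w : ℕ → List Bool) : ℕ → ℕ
  | 0 => (w 0).length
  | k+1 => Lv w k + ((w (k+1)).length + 1)

variable {w : ℕ → List Bool} {z z' : ℕ → Bool}

lemma glue_length (w z) : ∀ k, (glue w z k).length = Lv w k
  | 0 => rfl
  | k+1 => by simp [glue, Lv, glue_length w z k] <;> omega

lemma Lv_ge (w) : ∀ k, k ≤ Lv w k
  | 0 => Nat.zero_le _
  | k+1 => by have := Lv_ge w k; simp only [Lv]; omega

lemma Lv_mono (w) {a b : ℕ} (h : a ≤ b) : Lv w a ≤ Lv w b := by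
  induction b with
  | zero => simpa [Nat.le_zero.1 h]
  | succ b ih =>
    rcases Nat.lt_or_ge a (b+1) with h' | h'
    · exact le_trans (ih (by omega)) (by simp only [Lv]; omega)
    · have : a = b + 1 := by omega
      simp [this]

lemma Lv_lt_of_lt (w) {a b : ℕ} (h : a < b) : Lv w a < Lv w b := by
  have : Lv w (a+1) ≤ Lv w b := Lv_mono w h
  have : Lv w a < Lv w (a+1) := by simp only [Lv]; omega
  omega

lemma glue_prefix (w z) {a b : ℕ} (h : a ≤ b) : glue w z a <+: glue w z b := by
  induction b with
  | zero => simp [Nat.le_zero.1 h]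
  | succ b ih =>
    rcases Nat.lt_or_ge a (b+1) with h' | h'
    · exact (ih (by omega)).trans ⟨_, rfl⟩
    · have : a = b + 1 := by omega
      simp [this]

lemma getD_of_prefix {σ τ : List Bool} (h : σ <+: τ) {i : ℕ} (hi : i < σ.length) :
    τ.getD i false = σ.getD i false := by
  obtain ⟨t, rfl⟩ := h
  exact List.getD_append _ _ _ _ hi

def ebr (w : ℕ → List Bool) (z : ℕ → Bool) (m : ℕ) : Bool :=
  (glue w z (m+1)).getD m false

lemma ebr_eq_getD {k m : ℕ} (h : m < Lv w k) :
    ebr w z m = (glue w z k).getD m false := by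
  rcases le_total (m+1) k with h' | h'
  · exact (getD_of_prefix (glue_prefix w z h')
      (by rw [glue_length]; have := Lv_ge w (m+1); omega)).symm
  · exact getD_of_prefix (glue_prefix w z h') (by rw [glue_length]; exact h)

lemma glue_congr (h : ∀ j, j < k → z j = z' j) : glue w z k = glue w z' k := by
  induction k with
  | zero => rfl
  | succ k ih =>
    simp only [glue]
    rw [ih (fun j hj => h j (by omega)), h k (by omega)]

lemma ebr_congr {k m : ℕ} (hm : m < Lv w k) (h : ∀ j, j < k → z j = z' j) :
    ebr w z m = ebr w z' m := by
  rw [ebr_eq_getD hm, ebr_eq_getD hm, glue_congr h]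

lemma ebr_split (w z) (k : ℕ) : ebr w z (Lv w k + (w (k+1)).length) = z k := by
  have hlt : Lv w k + (w (k+1)).length < Lv w (k+1) := by simp only [Lv]; omega
  rw [ebr_eq_getD hlt]
  show (glue w z k ++ (w (k+1) ++ [z k])).getD _ false = z k
  rw [List.getD_append_right _ _ _ _ (by rw [glue_length]; omega)]
  rw [glue_length]
  rw [show Lv w k + (w (k+1)).length - Lv w k = (w (k+1)).length by omega]
  rw [List.getD_append_right _ _ _ _ (by omega)]
  simp

/-- `m` is a splitting position. -/
def Spos (w : ℕ → List Bool) (m : ℕ) : Prop := ∃ j, m = Lv w j + (w (j+1)).length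

lemma Spos_iff_Lv {m : ℕ} : Spos w m ↔ ∃ j, m + 1 = Lv w (j+1) := by
  constructor
  · rintro ⟨j, rfl⟩; exact ⟨j, by simp only [Lv]; omega⟩
  · rintro ⟨j, hj⟩; exact ⟨j, by simp only [Lv] at hj; omega⟩

lemma ebr_nonsplit_aux : ∀ k, ∀ m < Lv w k, ¬ Spos w m → ebr w z m = ebr w z' m := by
  intro k
  induction k with
  | zero =>
    intro m hm _
    rw [ebr_eq_getD (z := z) hm, ebr_eq_getD (z := z') hm]
    rfl
  | succ k ih =>
    intro m hm hns
    rcases Nat.lt_or_ge m (Lv w k) with h' | h'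
    · exact ih m h' hns
    · have hne : m ≠ Lv w k + (w (k+1)).length := fun h => hns ⟨k, h⟩
      have hlt : m - Lv w k < (w (k+1)).length := by
        simp only [Lv] at hm; omega
      rw [ebr_eq_getD (z := z) hm, ebr_eq_getD (z := z') hm]
      show (glue w z k ++ (w (k+1) ++ [z k])).getD m false
        = (glue w z' k ++ (w (k+1) ++ [z' k])).getD m false
      rw [List.getD_append_right (glue w z k) _ _ _ (by rw [glue_length]; omega),
        List.getD_append_right (glue w z' k) _ _ _ (by rw [glue_length]; omega)]
      rw [glue_length, glue_length]
      rw [List.getD_append _ _ _ _ hlt, List.getD_append _ _ _ _ hlt]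

lemma ebr_nonsplit {m : ℕ} (hns : ¬ Spos w m) (z z' : ℕ → Bool) :
    ebr w (z := z) m = ebr w z' m :=
  ebr_nonsplit_aux (z := z) (z' := z') (m+1) m (by have := Lv_ge w (m+1); omega) hns

/-- The Silver tree generated by `w`. -/
def Tw (w : ℕ → List Bool) : Set (List Bool) :=
  {σ | ∃ z : ℕ → Bool, ∀ i, i < σ.length → σ.getD i false = ebr w z i}

lemma nil_mem_Tw : ([] : List Bool) ∈ Tw w :=
  ⟨fun _ => false, fun i hi => by simp at hi⟩

lemma ofFn_ebr_mem_Tw (z : ℕ → Bool) (n : ℕ) :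
    (List.ofFn fun i : Fin n => ebr w z i) ∈ Tw w := by
  refine ⟨z, fun i hi => ?_⟩
  simp only [List.length_ofFn] at hi
  rw [List.getD_eq_getElem _ _ (by simpa), List.getElem_ofFn]

lemma isTree2_Tw : IsTree2 (Tw w) := by
  rintro σ ⟨z, hz⟩ n
  refine ⟨z, fun i hi => ?_⟩
  simp only [List.length_take, lt_inf_iff] at hi
  obtain ⟨hi1, hi2⟩ := hi
  rw [List.getD_eq_getElem _ _ (by simp; omega), List.getElem_take,
    ← List.getD_eq_getElem _ false hi2]
  exact hz i hi2

/-- Membership criterion for one-step extensions. -/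
lemma mem_Tw_concat_iff {σ : List Bool} (hσ : σ ∈ Tw w) (c : Bool) :
    σ ++ [c] ∈ Tw w ↔ (Spos w σ.length ∨ c = ebr w (fun _ => false) σ.length) := by
  obtain ⟨z, hz⟩ := hσ
  constructor
  · rintro ⟨z', hz'⟩
    by_cases hs : Spos w σ.length
    · exact Or.inl hs
    · refine Or.inr ?_
      have h1 := hz' σ.length (by simp)
      rw [List.getD_append_right _ _ _ _ le_rfl, Nat.sub_self] at h1
      simp at h1
      rw [h1]
      exact ebr_nonsplit hs z' _
  · intro hyp
    by_cases hs : Spos w σ.length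
    · -- splitting position: modify z at index j
      classical
      obtain ⟨j, hj⟩ := hs
      refine ⟨Function.update z j c, fun i hi => ?_⟩
      simp only [List.length_append, List.length_singleton] at hi
      rcases Nat.lt_or_ge i σ.length with h' | h'
      · rw [List.getD_append _ _ _ _ h', hz i h']
        rcases Nat.lt_or_ge i (Lv w j) with h2 | h2
        · exact ebr_congr h2 fun l hl => (Function.update_of_ne (by omega) _ _).symm
        · -- i lies within the word w (j+1): not a splitting position
          have hns : ¬ Spos w i := by
            rintro hsp
            obtain ⟨j', hj'⟩ := Spos_iff_Lv.1 hsp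
            have h4 : Lv w j + (w (j+1)).length < Lv w (j+1) := by simp only [Lv]; omega
            have h5 : j' + 1 < j + 1 := by
              by_contra h6
              have := Lv_mono w (show j + 1 ≤ j' + 1 by omega)
              omega
            have := Lv_mono w (show j' + 1 ≤ j by omega)
            omega
          exact ebr_nonsplit hns _ _
      · have hieq : i = σ.length := by omega
        subst hieq
        rw [List.getD_append_right _ _ _ _ le_rfl, Nat.sub_self]
        simp only [List.getD_cons_zero]
        rw [hj, ebr_split]
        simp
    · have hc : c = ebr w (fun _ => false) σ.length := hyp.resolve_left hs
      refine ⟨z, fun i hi => ?_⟩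
      simp only [List.length_append, List.length_singleton] at hi
      rcases Nat.lt_or_ge i σ.length with h' | h'
      · rw [List.getD_append _ _ _ _ h']; exact hz i h'
      · have hieq : i = σ.length := by omega
        subst hieq
        rw [List.getD_append_right _ _ _ _ le_rfl, Nat.sub_self]
        simp only [List.getD_cons_zero]
        rw [hc]
        exact ebr_nonsplit hs _ _

end SilverAux

namespace SilverAux

variable {w : ℕ → List Bool}

lemma isSilverTree2_Tw : IsSilverTree2 (Tw w) := by
  constructor
  · refine ⟨⟨[], nil_mem_Tw⟩, isTree2_Tw, ?_⟩
    rintro σ hσ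
    obtain ⟨z, hz⟩ := hσ
    set k := σ.length with hk
    set m' := Lv w k + (w (k+1)).length with hm'def
    have hm' : σ.length ≤ m' := le_trans (Lv_ge w k) (Nat.le_add_right _ _)
    refine ⟨List.ofFn (fun i : Fin m' => ebr w z i), ofFn_ebr_mem_Tw z m', ?_, ?_⟩
    · rw [List.prefix_iff_eq_take]
      refine List.ext_getElem (by simp [hm']) fun i h1 h2 => ?_
      rw [List.getElem_take, List.getElem_ofFn,
        ← List.getD_eq_getElem σ false h1, hz i h1]
    · have hlen : (List.ofFn fun i : Fin m' => ebr w z i).length = m' := by simp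
      constructor <;>
        · rw [mem_Tw_concat_iff (ofFn_ebr_mem_Tw z m') _]
          exact Or.inl (by rw [hlen]; exact ⟨k, rfl⟩)
  · intro σ hσ τ hτ hlen a
    rw [mem_Tw_concat_iff hσ, mem_Tw_concat_iff hτ, hlen]

/-! ### The measure-theoretic fusion construction -/

variable {μ : Measure (ℕ → Bool)} [IsProbabilityMeasure μ]

lemma le_half_of_double_le_one {a : ℝ≥0∞} (h : a * 2 ≤ 1) : a ≤ 1/2 :=
  (ENNReal.le_div_iff_mul_le (Or.inl (by norm_num)) (Or.inl (by norm_num))).2 h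

lemma pos_of_compl_le_half {G : Set (ℕ → Bool)} (hGm : MeasurableSet G)
    (hc : μ Gᶜ ≤ 1/2) : 0 < μ G := by
  by_contra h
  have h0 : μ G = 0 := by simpa using h
  have h1 : μ G + μ Gᶜ = 1 := by
    rw [measure_add_measure_compl hGm, measure_univ]
  rw [h0, zero_add] at h1
  rw [h1] at hc
  have : (1 : ℝ≥0∞) * 2 ≤ 1 :=
    (ENNReal.le_div_iff_mul_le (Or.inl (by norm_num)) (Or.inl (by norm_num))).1 hc
  norm_num at this

open scoped Classical in
noncomputable def pick (μ : Measure (ℕ → Bool)) [IsProbabilityMeasure μ]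
    (G : Set (ℕ → Bool)) : List Bool :=
  if h : MeasurableSet G ∧ 0 < μ G then (density (μ := μ) h.1 h.2).choose else []

lemma pick_spec {G : Set (ℕ → Bool)} (hG : MeasurableSet G) (hpos : 0 < μ G) :
    8 * μ (Gᶜ ∩ cylB (pick μ G)) ≤ μ (cylB (pick μ G)) := by
  have h : MeasurableSet G ∧ 0 < μ G := ⟨hG, hpos⟩
  simp only [pick, dif_pos h]
  exact (density (μ := μ) h.1 h.2).choose_spec

noncomputable def gseq (μ : Measure (ℕ → Bool)) [IsProbabilityMeasure μ]
    (F : Set (ℕ → Bool)) : ℕ → List Bool × Set (ℕ → Bool)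
  | 0 => (pick μ F, app (pick μ F) ⁻¹' F)
  | k+1 =>
    let G := (gseq μ F k).2
    (pick μ G, ⋂ b : Bool, app (pick μ G ++ [b]) ⁻¹' G)

variable (hμ : ∀ σ : List Bool, μ (cylB σ) = (1 / 2 : ℝ≥0∞) ^ σ.length)
  {F : Set (ℕ → Bool)}

include hμ in
/-- The key bound: `μ ((app u ⁻¹' G)ᶜ)` controlled by the density of `G` in `[u]`. -/
lemma half_bound {G : Set (ℕ → Bool)} {u : List Bool}
    (hc : μ ((app u ⁻¹' G)ᶜ) * 2 ≤ (2:ℝ≥0∞) ^ u.length * (8 * μ (Gᶜ ∩ cylB u)))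
    (hu : 8 * μ (Gᶜ ∩ cylB u) ≤ μ (cylB u)) : μ ((app u ⁻¹' G)ᶜ) ≤ 1/2 := by
  refine le_half_of_double_le_one ?_
  calc μ ((app u ⁻¹' G)ᶜ) * 2 ≤ (2:ℝ≥0∞) ^ u.length * (8 * μ (Gᶜ ∩ cylB u)) := hc
    _ ≤ (2:ℝ≥0∞) ^ u.length * μ (cylB u) := mul_le_mul_right hu _
    _ = (2:ℝ≥0∞) ^ u.length * (1/2) ^ u.length := by rw [hμ]
    _ = 1 := two_pow_mul_half_pow u.length

include hμ in
lemma gseq_invariant (hFm : MeasurableSet F) (hFpos : 0 < μ F) :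
    ∀ k, MeasurableSet (gseq μ F k).2 ∧ μ (((gseq μ F k).2)ᶜ) ≤ 1/2 := by
  intro k
  induction k with
  | zero =>
    refine ⟨hFm.preimage (measurable_app _), ?_⟩
    set u := pick μ F with hu
    have hps := pick_spec (μ := μ) hFm hFpos
    show μ ((app u ⁻¹' F)ᶜ) ≤ 1/2
    refine half_bound hμ ?_ hps
    rw [← preimage_compl, measure_app_preimage hμ hFm.compl u]
    calc (2:ℝ≥0∞) ^ u.length * μ (Fᶜ ∩ cylB u) * 2
        = (2:ℝ≥0∞) ^ u.length * (2 * μ (Fᶜ ∩ cylB u)) := by ring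
      _ ≤ (2:ℝ≥0∞) ^ u.length * (8 * μ (Fᶜ ∩ cylB u)) := by
          refine mul_le_mul_right (mul_le_mul_left (by norm_num) _) _
  | succ k ih =>
    obtain ⟨hGm, hGc⟩ := ih
    set G := (gseq μ F k).2 with hG
    have hGpos : 0 < μ G := pos_of_compl_le_half hGm hGc
    set u := pick μ G with hu
    have hps := pick_spec (μ := μ) hGm hGpos
    have hmeas : MeasurableSet (⋂ b : Bool, app (u ++ [b]) ⁻¹' G) :=
      MeasurableSet.iInter fun b => hGm.preimage (measurable_app _)
    refine ⟨hmeas, ?_⟩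
    show μ ((⋂ b : Bool, app (u ++ [b]) ⁻¹' G)ᶜ) ≤ 1/2
    have hcompl : (⋂ b : Bool, app (u ++ [b]) ⁻¹' G)ᶜ
        = ⋃ b : Bool, app (u ++ [b]) ⁻¹' Gᶜ := by
      rw [compl_iInter]
      simp [preimage_compl]
    have hbU : (⋃ b : Bool, app (u ++ [b]) ⁻¹' Gᶜ)
        = app (u ++ [false]) ⁻¹' Gᶜ ∪ app (u ++ [true]) ⁻¹' Gᶜ := by
      ext x; simp [Bool.exists_bool]
    have hone : ∀ b : Bool, μ (app (u ++ [b]) ⁻¹' Gᶜ) ≤ 2 ^ (u.length + 1) * μ (Gᶜ ∩ cylB u) := by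
      intro b
      rw [measure_app_preimage hμ hGm.compl]
      rw [List.length_append, List.length_singleton]
      exact mul_le_mul_right (measure_mono (inter_subset_inter_right _
        (cylB_subset_of_prefix ⟨[b], rfl⟩))) _
    refine le_half_of_double_le_one ?_
    calc μ ((⋂ b : Bool, app (u ++ [b]) ⁻¹' G)ᶜ) * 2
        ≤ (2 ^ (u.length + 1) * μ (Gᶜ ∩ cylB u)
            + 2 ^ (u.length + 1) * μ (Gᶜ ∩ cylB u)) * 2 := by
          refine mul_le_mul_left ?_ _
          rw [hcompl, hbU]
          exact (measure_union_le _ _).trans (add_le_add (hone false) (hone true))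
      _ = (2:ℝ≥0∞) ^ u.length * (8 * μ (Gᶜ ∩ cylB u)) := by ring
      _ ≤ (2:ℝ≥0∞) ^ u.length * μ (cylB u) := mul_le_mul_right hps _
      _ = (2:ℝ≥0∞) ^ u.length * (1/2) ^ u.length := by rw [hμ]
      _ = 1 := two_pow_mul_half_pow u.length

lemma gseq_subset (F : Set (ℕ → Bool)) (z : ℕ → Bool) :
    ∀ k, (gseq μ F k).2 ⊆ app (glue (fun j => (gseq μ F j).1) z k) ⁻¹' F := by
  intro k
  induction k with
  | zero => exact fun x hx => hx
  | succ k ih =>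
    intro x hx
    have hx' : app ((gseq μ F (k+1)).1 ++ [z k]) x ∈ (gseq μ F k).2 := by
      have := mem_iInter.1 (show x ∈ ⋂ b : Bool,
        app ((gseq μ F (k+1)).1 ++ [b]) ⁻¹' (gseq μ F k).2 from hx) (z k)
      exact this
    have h2 := ih hx'
    rw [mem_preimage] at h2 ⊢
    rw [app_app] at h2
    exact h2

end SilverAux

/-- Every closed subset of Cantor space of positive measure, with respect to the standard
coin-flipping measure `λ` — characterized by `λ [σ] = 2^{-|σ|}` for every finite binary
sequence `σ` — contains the body of a Silver tree. -/
theorem closed_positive_measure_contains_silver_body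
    (μ : Measure (ℕ → Bool)) [IsProbabilityMeasure μ]
    (hμ : ∀ σ : List Bool, μ (cylB σ) = (1 / 2 : ℝ≥0∞) ^ σ.length)
    (F : Set (ℕ → Bool)) (hF : IsClosed F) (hpos : 0 < μ F) :
    ∃ S : Set (List Bool), IsSilverTree2 S ∧ body2 S ⊆ F := by
  classical
  have hFm : MeasurableSet F := hF.measurableSet
  set w : ℕ → List Bool := fun k => (SilverAux.gseq μ F k).1 with hw
  refine ⟨SilverAux.Tw w, SilverAux.isSilverTree2_Tw, ?_⟩
  intro x hx
  rw [← hF.closure_eq]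
  rw [mem_closure_iff]
  intro o ho hxo
  obtain ⟨n, hn⟩ := SilverAux.exists_cylB_subset ho hxo
  obtain ⟨z, hz⟩ := hx (SilverAux.Lv w n)
  set σ : List Bool := List.ofFn (fun i : Fin (SilverAux.Lv w n) => x i) with hσ
  have hσlen : σ.length = SilverAux.Lv w n := by simp [hσ]
  have hσg : σ = SilverAux.glue w z n := by
    refine List.ext_getElem (by rw [hσlen, SilverAux.glue_length]) fun i h1 h2 => ?_
    have hiLv : i < SilverAux.Lv w n := by rwa [hσlen] at h1
    rw [← List.getD_eq_getElem σ false h1, hz i h1,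
      SilverAux.ebr_eq_getD hiLv, List.getD_eq_getElem]
  -- positive measure of F inside the cylinder of σ
  have hinv := SilverAux.gseq_invariant hμ hFm hpos n
  have hGpos : 0 < μ ((SilverAux.gseq μ F n).2) :=
    SilverAux.pos_of_compl_le_half hinv.1 hinv.2
  have hsub := SilverAux.gseq_subset (μ := μ) F z n
  have hpre : 0 < μ (SilverAux.app (SilverAux.glue w z n) ⁻¹' F) :=
    lt_of_lt_of_le hGpos (measure_mono hsub)
  have hF6 := SilverAux.measure_app_preimage hμ hFm (SilverAux.glue w z n)
  have hFpos : μ (F ∩ cylB (SilverAux.glue w z n)) ≠ 0 := by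
    intro h0
    rw [hF6, h0, mul_zero] at hpre
    exact lt_irrefl _ hpre
  obtain ⟨y, hyF, hycyl⟩ := MeasureTheory.nonempty_of_measure_ne_zero hFpos
  refine ⟨y, ?_, hyF⟩
  -- y ∈ cylB (glue w z n) ⊆ cylB (ofFn n x) ⊆ o
  apply hn
  have hpre2 : (List.ofFn fun i : Fin n => x i) <+: σ := by
    rw [show (List.ofFn fun i : Fin n => x i) = σ.take n from
      (SilverAux.take_ofFn x (SilverAux.Lv_ge w n)).symm]
    exact List.take_prefix n σ
  exact SilverAux.cylB_subset_of_prefix hpre2 (hσg ▸ hycyl)
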